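/- Let Ω ⊂ ℝ² be open and let F : ℝ² → ℝ be three times continuously differentiable. Suppose that for every (x,y) ∈ Ω the function ε ↦ F(x + ε·F_y(x,y), y − ε·F_x(x,y)) is even in ε in some neighborhood of ε = 0 (i.e., its values at ε and −ε coincide for all small ε). Then F_y·∂_x(H(F)) − F_x·∂_y(H(F)) = 0 at every point of Ω, where H(F) = F_xx·F_y² − 2·F_xy·F_x·F_y + F_yy·F_x². That is, H(F) has zero derivative along the vector field V = F_y·∂_x − F_x·∂_y tangent to the level curves of F. -/

import Mathlib

/-!
Along the line `ε ↦ p + ε V(p)`, with `V = (F_y, -F_x)`, the third derivative at `ε = 0` is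
`D³F(p)(V, V, V)`, and this vanishes when the restriction of `F` to the line is even. On the other
hand `H = D²F(V, V)`, so `V(H)(p) = D³F(p)(V, V, V) + 2 D²F(p)(V, DV·V)`, and the last term is
`F_y'·F_x' - F_x'·F_y' = 0` (primes denoting derivatives along `V`). Hence `V(H)(p) = 0`.
-/

/-- Partial derivative in the first variable of a function `ℝ × ℝ → ℝ`. -/
noncomputable def pdx (F : ℝ × ℝ → ℝ) (p : ℝ × ℝ) : ℝ := fderiv ℝ F p (1, 0)

/-- Partial derivative in the second variable of a function `ℝ × ℝ → ℝ`. -/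
noncomputable def pdy (F : ℝ × ℝ → ℝ) (p : ℝ × ℝ) : ℝ := fderiv ℝ F p (0, 1)

/-- `H(F) = F_xx F_y² - 2 F_xy F_x F_y + F_yy F_x²`. -/
noncomputable def hessH (F : ℝ × ℝ → ℝ) (p : ℝ × ℝ) : ℝ :=
  pdx (pdx F) p * (pdy F p) ^ 2 - 2 * pdx (pdy F) p * pdx F p * pdy F p
    + pdy (pdy F) p * (pdx F p) ^ 2

open Filter Topology

theorem iteratedDeriv_eq_zero_of_odd_of_even {𝕜 E : Type*} [NontriviallyNormedField 𝕜]
    [CharZero 𝕜] [NormedAddCommGroup E] [NormedSpace 𝕜 E] {f : 𝕜 → E}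
    (hf : f =ᶠ[𝓝 0] fun x => f (-x)) {n : ℕ} (hn : Odd n) : iteratedDeriv n f 0 = 0 := by
  have h := hf.iteratedDeriv_eq n
  rw [iteratedDeriv_comp_neg, hn.neg_one_pow, neg_one_smul, neg_zero] at h
  have h2 : (2 : 𝕜) • iteratedDeriv n f 0 = 0 := by
    rw [two_smul]
    nth_rewrite 1 [h]
    exact neg_add_cancel _
  exact (smul_eq_zero.mp h2).resolve_left two_ne_zero

section Line

variable {𝕜 E G : Type*} [NontriviallyNormedField 𝕜] [NormedAddCommGroup E] [NormedSpace 𝕜 E]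
  [NormedAddCommGroup G] [NormedSpace 𝕜 G]

theorem deriv_comp_add_smul {f : E → G} (hf : Differentiable 𝕜 f) (p v : E) :
    deriv (fun t : 𝕜 => f (p + t • v)) = fun t => fderiv 𝕜 f (p + t • v) v := by
  funext t
  have hline : HasDerivAt (fun t : 𝕜 => p + t • v) v t := by
    simpa using ((hasDerivAt_id t).smul_const v).const_add p
  exact ((hf _).hasFDerivAt.comp_hasDerivAt t hline).deriv

theorem iteratedDeriv_comp_add_smul {n : ℕ} {f : E → G} (hf : ContDiff 𝕜 n f) (p v : E) :
    iteratedDeriv n (fun t : 𝕜 => f (p + t • v)) =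
      fun t => (fun g q => fderiv 𝕜 g q v)^[n] f (p + t • v) := by
  induction n generalizing f with
  | zero => simp
  | succ n ih =>
    have hdiff : Differentiable 𝕜 f := hf.differentiable (by simp)
    have hderiv : ContDiff 𝕜 n (fun q => fderiv 𝕜 f q v) :=
      (hf.fderiv_right (by push_cast; rfl)).clm_apply contDiff_const
    rw [iteratedDeriv_succ', deriv_comp_add_smul hdiff, ih hderiv]
    rfl

end Line

section Plane

variable {f : ℝ × ℝ → ℝ}

theorem fderiv_apply_eq_pdx_pdy (f : ℝ × ℝ → ℝ) (p w : ℝ × ℝ) :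
    fderiv ℝ f p w = w.1 * pdx f p + w.2 * pdy f p := by
  have hw : w = w.1 • ((1 : ℝ), (0 : ℝ)) + w.2 • ((0 : ℝ), (1 : ℝ)) := by ext <;> simp
  rw [hw, map_add, map_smul, map_smul]
  simp [pdx, pdy]

theorem contDiff_pdx {n m : WithTop ℕ∞} (hf : ContDiff ℝ n f) (hmn : m + 1 ≤ n) :
    ContDiff ℝ m (pdx f) :=
  (hf.fderiv_right hmn).clm_apply contDiff_const

theorem contDiff_pdy {n m : WithTop ℕ∞} (hf : ContDiff ℝ n f) (hmn : m + 1 ≤ n) :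
    ContDiff ℝ m (pdy f) :=
  (hf.fderiv_right hmn).clm_apply contDiff_const

theorem pdy_pdx (hf : ContDiff ℝ 2 f) : pdy (pdx f) = pdx (pdy f) := by
  funext p
  have hd : Differentiable ℝ (fderiv ℝ f) :=
    (hf.fderiv_right (by norm_num : (1 : WithTop ℕ∞) + 1 ≤ 2)).differentiable (by norm_num)
  have hswap (w u : ℝ × ℝ) :
      fderiv ℝ (fun q => fderiv ℝ f q w) p u = fderiv ℝ (fderiv ℝ f) p u w := by
    rw [fderiv_clm_apply (hd p) (differentiableAt_const w)]
    simp
  change fderiv ℝ (fun q => fderiv ℝ f q (1, 0)) p (0, 1)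
    = fderiv ℝ (fun q => fderiv ℝ f q (0, 1)) p (1, 0)
  rw [hswap, hswap, hf.contDiffAt.isSymmSndFDerivAt (by norm_num)]

theorem differentiable_partials (hf : ContDiff ℝ 3 f) :
    Differentiable ℝ (pdx f) ∧ Differentiable ℝ (pdy f) ∧ Differentiable ℝ (pdx (pdx f)) ∧
      Differentiable ℝ (pdx (pdy f)) ∧ Differentiable ℝ (pdy (pdy f)) := by
  have hx : ContDiff ℝ 2 (pdx f) := contDiff_pdx hf (by norm_num)
  have hy : ContDiff ℝ 2 (pdy f) := contDiff_pdy hf (by norm_num)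
  refine ⟨hx.differentiable (by norm_num), hy.differentiable (by norm_num), ?_, ?_, ?_⟩
  · exact (contDiff_pdx hx (m := 1) (by norm_num)).differentiable one_ne_zero
  · exact (contDiff_pdx hy (m := 1) (by norm_num)).differentiable one_ne_zero
  · exact (contDiff_pdy hy (m := 1) (by norm_num)).differentiable one_ne_zero

theorem iterate_fderiv_three_eq (hf : ContDiff ℝ 3 f) (v p : ℝ × ℝ) :
    (fun g q => fderiv ℝ g q v)^[3] f p =
      v.1 ^ 3 * pdx (pdx (pdx f)) p + 3 * v.1 ^ 2 * v.2 * pdx (pdx (pdy f)) p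
        + 3 * v.1 * v.2 ^ 2 * pdx (pdy (pdy f)) p + v.2 ^ 3 * pdy (pdy (pdy f)) p := by
  obtain ⟨_, _, _, _, _⟩ := differentiable_partials hf
  -- Unfolding the iterate first makes `simp` expand the inner derivatives before differentiating
  -- the outer ones.
  simp only [Function.iterate_succ_apply', Function.iterate_zero_apply]
  simp (disch := fun_prop) only [fderiv_apply_eq_pdx_pdy, fderiv_fun_add, fderiv_const_mul,
    add_apply, smul_apply, smul_eq_mul, pdy_pdx (hf.of_le (by norm_num)),
    pdy_pdx (contDiff_pdx hf (by norm_num)), pdy_pdx (contDiff_pdy hf (by norm_num))]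
  ring

noncomputable def skewGrad (f : ℝ × ℝ → ℝ) (p : ℝ × ℝ) : ℝ × ℝ := (pdy f p, -pdx f p)

theorem iterate_fderiv_skewGrad_three (hf : ContDiff ℝ 3 f) (p : ℝ × ℝ) :
    (fun g q => fderiv ℝ g q (skewGrad f p))^[3] f p =
      pdy f p * pdx (hessH f) p - pdx f p * pdy (hessH f) p := by
  obtain ⟨_, _, _, _, _⟩ := differentiable_partials hf
  rw [iterate_fderiv_three_eq hf, pdx.eq_1 (hessH f), pdy.eq_1 (hessH f)]
  unfold hessH
  simp (disch := fun_prop) only [fderiv_fun_add, fderiv_fun_sub, fderiv_fun_mul, fderiv_fun_pow,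
    fderiv_fun_const, Pi.zero_apply, zero_apply, add_apply, sub_apply, smul_apply, smul_eq_mul,
    fderiv_apply_eq_pdx_pdy, pdy_pdx (hf.of_le (by norm_num)),
    pdy_pdx (contDiff_pdx hf (by norm_num)), pdy_pdx (contDiff_pdy hf (by norm_num)), skewGrad]
  ring

end Plane

theorem hess_constant_along_skew_gradient_of_even_general
    (F : ℝ × ℝ → ℝ) (hF : ContDiff ℝ 3 F)
    (Ω : Set (ℝ × ℝ))
    (heven : ∀ p ∈ Ω, ∃ δ > (0 : ℝ), ∀ ε : ℝ, |ε| < δ →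
      F (p.1 + ε * pdy F p, p.2 - ε * pdx F p) =
        F (p.1 - ε * pdy F p, p.2 + ε * pdx F p)) :
    ∀ p ∈ Ω, pdy F p * pdx (hessH F) p - pdx F p * pdy (hessH F) p = 0 := by
  intro p hp
  obtain ⟨δ, hδ, hδeven⟩ := heven p hp
  have hline_even : (fun t : ℝ => F (p + t • skewGrad F p)) =ᶠ[𝓝 0]
      fun t => F (p + (-t) • skewGrad F p) := by
    filter_upwards [Metric.ball_mem_nhds 0 hδ] with t ht
    rw [Metric.mem_ball, dist_zero_right, Real.norm_eq_abs] at ht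
    convert hδeven t ht using 2 <;> ext <;> simp [skewGrad] <;> ring
  have h3 := iteratedDeriv_eq_zero_of_odd_of_even hline_even (by decide : Odd 3)
  rw [iteratedDeriv_comp_add_smul hF] at h3
  simpa only [zero_smul, add_zero, iterate_fderiv_skewGrad_three hF] using h3

/-- If for every point of an open set `Ω` the function
`ε ↦ F(x + ε F_y, y - ε F_x)` is even in `ε` near `ε = 0`, then `H(F)` has zero
derivative along the field `V = F_y ∂_x - F_x ∂_y` on `Ω`. -/
theorem hess_constant_along_skew_gradient_of_even
    (F : ℝ × ℝ → ℝ) (hF : ContDiff ℝ 3 F)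
    (Ω : Set (ℝ × ℝ)) (hΩ : IsOpen Ω)
    (heven : ∀ p ∈ Ω, ∃ δ > (0 : ℝ), ∀ ε : ℝ, |ε| < δ →
      F (p.1 + ε * pdy F p, p.2 - ε * pdx F p) =
        F (p.1 - ε * pdy F p, p.2 + ε * pdx F p)) :
    ∀ p ∈ Ω, pdy F p * pdx (hessH F) p - pdx F p * pdy (hessH F) p = 0 :=
  hess_constant_along_skew_gradient_of_even_general F hF Ω heven
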